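/- Let y be a process such that each y_τ is 𝓕_τ-measurable and integrable, and y_τ = φ_0(τ) + Σ_{m=1}^p φ_m(τ) y_{τ−m} + ε_τ almost surely for every τ ∈ ℤ. Then for every t ∈ ℤ and every integer N ≥ 1, the forecast error of the N-step-ahead predictor satisfies, almost surely, y_t − E[y_t | 𝓕_{t−N}] = Σ_{r=0}^{N−1} ξ_{t,r} ε_{t−r}. -/

import Mathlib

/-!
Expanding `det Φ_{t,k}` along its first row gives the recursion
`ξ_{t,k} = ∑_{r<k} φ_{k-r}(t-r) ξ_{t,r}` (`ξ_{t,0} = 1`), so `ξ_t` is the Green function of the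
PAR recursion read backwards from time `t`. Substituting the model equation `N` times therefore
writes `y_t` as `∑_{r<N} ξ_{t,r} (φ_0(t-r) + ε_{t-r})` plus a combination of
`y_{t-N}, …, y_{t-N-p+1}`, which is `𝓕_{t-N}`-measurable. By the tower property each `ε_{t-r}`
with `r < N` has zero conditional expectation given `𝓕_{t-N}`, so conditioning on `𝓕_{t-N}`
removes exactly the innovation terms.
-/

open Finset

/-- The `k × k` solution matrix `Φ_{t,k}`: its (1-based) `(i,j)` entry is `-1` if `i = j-1`,
`φ_{1+i−j}(t−k+i)` if `0 ≤ i−j ≤ p−1`, and `0` otherwise. -/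
noncomputable def PhiMat (p : ℕ) (φ : ℕ → ℤ → ℝ) (t : ℤ) (k : ℕ) :
    Matrix (Fin k) (Fin k) ℝ :=
  fun i j =>
    if (i : ℕ) + 1 = (j : ℕ) then -1
    else if (j : ℕ) ≤ (i : ℕ) ∧ (i : ℕ) - (j : ℕ) + 1 ≤ p then
      φ ((i : ℕ) - (j : ℕ) + 1) (t - (k : ℤ) + (i : ℕ) + 1)
    else 0

/-- The Hessenbergian (Green function) `ξ_{t,k} = det Φ_{t,k}`, with the conventions
`ξ_{t,0} = 1` (empty determinant) and `ξ_{t,k} = 0` for `k < 0`. -/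
noncomputable def xi (p : ℕ) (φ : ℕ → ℤ → ℝ) (t : ℤ) (k : ℤ) : ℝ :=
  if 0 ≤ k then (PhiMat p φ t k.toNat).det else 0

namespace Matrix

variable {R : Type*} [CommRing R]

/-- Row `i` of `hessenberg c s k` carries lag `k - 1 - i`, and `c r m` is the coefficient of lag
`r + m` in the equation at lag `r`; the first column is shifted by `s` further lags, which lets the
first-row Laplace expansion close up under induction on `k`. -/
def hessenberg (c : ℕ → ℕ → R) (s k : ℕ) : Matrix (Fin k) (Fin k) R := fun i j =>
  if (j : ℕ) = 0 then c (k - 1 - i) (i + 1 + s)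
  else if (i : ℕ) + 1 = j then -1
  else if (j : ℕ) ≤ i then c (k - 1 - i) (i + 1 - j)
  else 0

lemma hessenberg_submatrix_succ_zero (c : ℕ → ℕ → R) (s k : ℕ) :
    (hessenberg c s (k + 2)).submatrix Fin.succ (Fin.succAbove 0) = hessenberg c 0 (k + 1) := by
  ext a b
  rcases Fin.eq_zero_or_eq_succ b with rfl | ⟨b, rfl⟩ <;> simp [hessenberg]

lemma hessenberg_submatrix_succ_one (c : ℕ → ℕ → R) (s k : ℕ) :
    (hessenberg c s (k + 2)).submatrix Fin.succ (Fin.succAbove 1)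
      = hessenberg c (s + 1) (k + 1) := by
  ext a b
  rcases Fin.eq_zero_or_eq_succ b with rfl | ⟨b, rfl⟩
  · simp [hessenberg]
    ring_nf
  · simp [hessenberg, Fin.succAbove_of_le_castSucc, Fin.le_def]

lemma det_hessenberg_succ_succ (c : ℕ → ℕ → R) (s k : ℕ) :
    (hessenberg c s (k + 2)).det
      = c (k + 1) (s + 1) * (hessenberg c 0 (k + 1)).det + (hessenberg c (s + 1) (k + 1)).det := by
  rw [det_succ_row_zero, Fin.sum_univ_succ, Fin.sum_univ_succ, Fin.succ_zero_eq_one,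
    Fin.val_one, hessenberg_submatrix_succ_zero, hessenberg_submatrix_succ_one, sum_eq_zero]
  · simp [hessenberg, add_comm]
  · intro i _
    simp [hessenberg]

theorem det_hessenberg_succ (c : ℕ → ℕ → R) (k s : ℕ) :
    (hessenberg c s (k + 1)).det
      = ∑ r ∈ range (k + 1), c r (k + 1 - r + s) * (hessenberg c 0 r).det := by
  induction k generalizing s with
  | zero => simp [det_unique, hessenberg, add_comm]
  | succ k ih =>
    rw [det_hessenberg_succ_succ, ih (s + 1), sum_range_succ _ (k + 1), add_comm]
    congr 1
    · refine sum_congr rfl fun r hr => ?_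
      rw [mem_range] at hr
      congr 2
      omega
    · simp [add_comm]

end Matrix

section Recursion

variable {R : Type*} [CommRing R] {p : ℕ} {c : ℕ → ℕ → R} {ξ b x : ℕ → R}

/-- The coefficient of `x (N + j)` after substituting the recursion for `x` into itself `N`
times. -/
def remainderCoeff (ξ : ℕ → R) (c : ℕ → ℕ → R) (N j : ℕ) : R :=
  ∑ r ∈ range N, ξ r * c r (N + j - r)

lemma remainderCoeff_succ (k j : ℕ) :
    remainderCoeff ξ c (k + 1) j = ξ k * c k (j + 1) + remainderCoeff ξ c k (j + 1) := by
  rw [remainderCoeff, sum_range_succ, add_comm, remainderCoeff,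
    show k + 1 + j - k = j + 1 by omega]
  congr 1
  exact sum_congr rfl fun r _ => by rw [show k + 1 + j - r = k + (j + 1) - r by omega]

theorem eq_sum_mul_add_sum_remainderCoeff (hc : ∀ r m, p < m → c r m = 0) (hξ0 : ξ 0 = 1)
    (hξ : ∀ k, ξ (k + 1) = ∑ r ∈ range (k + 1), c r (k + 1 - r) * ξ r)
    (hx : ∀ r, x r = b r + ∑ j ∈ range p, c r (j + 1) * x (r + j + 1)) {N : ℕ} (hN : 1 ≤ N) :
    x 0 = ∑ r ∈ range N, ξ r * b r + ∑ j ∈ range p, remainderCoeff ξ c N j * x (N + j) := by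
  induction N, hN using Nat.le_induction with
  | base => simp [remainderCoeff, hξ0, hx 0, add_comm 1]
  | succ N hN ih =>
    obtain ⟨k, rfl⟩ : ∃ k, N = k + 1 := ⟨N - 1, by omega⟩
    have h_top : remainderCoeff ξ c (k + 1) p = 0 :=
      sum_eq_zero fun r hr => by rw [hc _ _ (by simp at hr; omega), mul_zero]
    have h_zero : remainderCoeff ξ c (k + 1) 0 = ξ (k + 1) := by
      rw [hξ]; exact sum_congr rfl fun r _ => mul_comm _ _
    have hrem : ∑ j ∈ range p, remainderCoeff ξ c (k + 1) j * x (k + 1 + j)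
        = ξ (k + 1) * b (k + 1)
          + ∑ j ∈ range p, remainderCoeff ξ c (k + 1 + 1) j * x (k + 1 + 1 + j) := by
      calc ∑ j ∈ range p, remainderCoeff ξ c (k + 1) j * x (k + 1 + j)
          = ∑ j ∈ range (p + 1), remainderCoeff ξ c (k + 1) j * x (k + 1 + j) := by
            rw [sum_range_succ, h_top, zero_mul, add_zero]
        _ = ξ (k + 1) * x (k + 1)
            + ∑ j ∈ range p, remainderCoeff ξ c (k + 1) (j + 1) * x (k + 1 + (j + 1)) := by
            rw [sum_range_succ', h_zero, add_zero, add_comm]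
        _ = _ := by
            rw [hx (k + 1), mul_add, mul_sum, add_assoc, ← sum_add_distrib]
            simp only [remainderCoeff_succ (k + 1), add_mul]
            congr 1
            exact sum_congr rfl fun j _ => by
              rw [show k + 1 + j + 1 = k + 1 + 1 + j by omega,
                show k + 1 + (j + 1) = k + 1 + 1 + j by omega, mul_assoc]
    rw [ih, hrem, sum_range_succ _ (k + 1)]
    ring

end Recursion

open MeasureTheory Filter

section CondExp

variable {Ω : Type*} {m m' m0 : MeasurableSpace Ω} {μ : Measure Ω}

lemma condExp_ae_eq_zero_of_le {f : Ω → ℝ} (hmm' : m ≤ m') (hm' : m' ≤ m0)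
    [SigmaFinite (μ.trim hm')] (hf : μ[f | m'] =ᵐ[μ] 0) : μ[f | m] =ᵐ[μ] 0 :=
  calc μ[f | m] =ᵐ[μ] μ[μ[f | m'] | m] := (condExp_condExp_of_le hmm' hm').symm
    _ =ᵐ[μ] μ[0 | m] := condExp_congr_ae hf
    _ = 0 := condExp_zero

lemma condExp_sum_smul_ae_eq_zero {ι : Type*} {s : Finset ι} (a : ι → ℝ) {f : ι → Ω → ℝ}
    (hf : ∀ i ∈ s, Integrable (f i) μ) (h0 : ∀ i ∈ s, μ[f i | m] =ᵐ[μ] 0) :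
    μ[∑ i ∈ s, a i • f i | m] =ᵐ[μ] 0 := by
  have h0' (i : ι) (hi : i ∈ s) : μ[a i • f i | m] =ᵐ[μ] 0 :=
    (condExp_smul (a i) (f i) m).trans ((h0 i hi).mono fun ω h => by simp [h])
  filter_upwards [condExp_finsetSum (fun i hi => (hf i hi).smul (a i)) m,
    (eventually_all_finset s).2 h0'] with ω hsum hω
  rw [hsum, Finset.sum_apply]
  exact sum_eq_zero hω

lemma sub_condExp_ae_eq_of_ae_eq_add (hm : m ≤ m0) [SigmaFinite (μ.trim hm)] {X D M : Ω → ℝ}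
    (hD : StronglyMeasurable[m] D) (hDi : Integrable D μ) (hMi : Integrable M μ)
    (hM : μ[M | m] =ᵐ[μ] 0) (hX : X =ᵐ[μ] D + M) : X - μ[X | m] =ᵐ[μ] M := by
  have hcond : μ[X | m] =ᵐ[μ] D := by
    filter_upwards [(condExp_congr_ae hX).trans (condExp_add hDi hMi m), hM] with ω h h0
    simp [h, h0, condExp_of_stronglyMeasurable hm hD hDi]
  filter_upwards [hX, hcond] with ω h1 h2
  simp [h1, h2]

end CondExp

section Green

variable (p : ℕ) (φ : ℕ → ℤ → ℝ) (t : ℤ)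

def lagCoeff (r m : ℕ) : ℝ :=
  if m ≤ p then φ m (t - r) else 0

lemma lagCoeff_of_lt (r : ℕ) {m : ℕ} (hm : p < m) :
    lagCoeff p φ t r m = 0 :=
  if_neg (not_le.2 hm)

lemma sum_Icc_eq_sum_range_lagCoeff (r : ℕ) (z : ℤ → ℝ) :
    ∑ m ∈ Icc 1 p, φ m (t - r) * z (t - r - m)
      = ∑ j ∈ range p, lagCoeff p φ t r (j + 1) * z (t - ↑(r + j + 1)) := by
  rw [← Ico_add_one_right_eq_Icc, sum_Ico_eq_sum_range, add_tsub_cancel_right]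
  refine sum_congr rfl fun j hj => ?_
  rw [lagCoeff, if_pos (by simp at hj; omega), add_comm 1 j]
  push_cast
  ring_nf

lemma phiMat_eq_hessenberg (k : ℕ) :
    PhiMat p φ t k = Matrix.hessenberg (lagCoeff p φ t) 0 k := by
  ext i j
  have hi := i.isLt
  simp only [PhiMat, Matrix.hessenberg, lagCoeff]
  split_ifs <;> first | rfl | omega | (congr 1 <;> omega)

lemma xi_natCast (k : ℕ) :
    xi p φ t k = (Matrix.hessenberg (lagCoeff p φ t) 0 k).det := by
  simp [xi, phiMat_eq_hessenberg]

lemma xi_zero : xi p φ t 0 = 1 := by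
  simpa using xi_natCast p φ t 0

lemma xi_succ (k : ℕ) :
    xi p φ t ↑(k + 1) = ∑ r ∈ range (k + 1), lagCoeff p φ t r (k + 1 - r) * xi p φ t r := by
  simp only [xi_natCast, Matrix.det_hessenberg_succ, add_zero]

end Green

section PAR

variable {p : ℕ} {φ : ℕ → ℤ → ℝ} {Ω : Type*} {m0 : MeasurableSpace Ω} {μ : Measure Ω}
  {ε y : ℤ → Ω → ℝ}

/-- The `N`-step-ahead predictor `E[y_t | 𝓕_{t-N}]`, read off the `N`-fold unrolled recursion. -/
noncomputable def parPredictor (p : ℕ) (φ : ℕ → ℤ → ℝ) (t : ℤ) (y : ℤ → Ω → ℝ) (N : ℕ) (ω : Ω) :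
    ℝ :=
  ∑ r ∈ range N, xi p φ t r * φ 0 (t - r)
    + ∑ j ∈ range p, remainderCoeff (fun r : ℕ => xi p φ t r) (lagCoeff p φ t) N j
      * y (t - ↑(N + j)) ω

lemma stronglyMeasurable_parPredictor {𝓕 : Filtration ℤ m0}
    (hymeas : ∀ τ : ℤ, StronglyMeasurable[𝓕 τ] (y τ)) (t : ℤ) (N : ℕ) :
    StronglyMeasurable[𝓕 (t - N)] (parPredictor p φ t y N) :=
  stronglyMeasurable_const.add <| Finset.stronglyMeasurable_fun_sum _ fun _ _ =>
    ((hymeas _).mono (𝓕.mono (by omega))).const_mul _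

lemma integrable_parPredictor [IsFiniteMeasure μ] (hyint : ∀ τ : ℤ, Integrable (y τ) μ)
    (t : ℤ) (N : ℕ) : Integrable (parPredictor p φ t y N) μ :=
  (integrable_const _).add (integrable_finsetSum _ fun _ _ => (hyint _).const_mul _)

theorem ae_eq_parPredictor_add_innovations
    (hy : ∀ τ : ℤ, y τ =ᵐ[μ] fun ω =>
      φ 0 τ + (∑ m ∈ Finset.Icc 1 p, φ m τ * y (τ - m) ω) + ε τ ω)
    (t : ℤ) {N : ℕ} (hN : 1 ≤ N) :
    y t =ᵐ[μ] parPredictor p φ t y N + ∑ r ∈ range N, xi p φ t r • ε (t - r) := by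
  filter_upwards [ae_all_iff.2 fun r : ℕ => hy (t - r)] with ω hω
  have h := eq_sum_mul_add_sum_remainderCoeff (ξ := fun r : ℕ => xi p φ t r)
    (x := fun r : ℕ => y (t - r) ω) (b := fun r : ℕ => φ 0 (t - r) + ε (t - r) ω)
    (lagCoeff_of_lt p φ t) (xi_zero p φ t) (xi_succ p φ t) (fun r => ?_) hN
  · simp only [Nat.cast_zero, sub_zero] at h
    simp only [h, parPredictor, Pi.add_apply, Finset.sum_apply, Pi.smul_apply, smul_eq_mul,
      mul_add, sum_add_distrib]
    ring
  · have hsum := sum_Icc_eq_sum_range_lagCoeff p φ t r fun τ => y τ ω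
    rw [hω r, hsum]
    ring

end PAR

theorem par_forecast_error_general
    (p : ℕ) (φ : ℕ → ℤ → ℝ)
    {Ω : Type*} {m0 : MeasurableSpace Ω} {μ : Measure Ω} [IsProbabilityMeasure μ]
    (𝓕 : Filtration ℤ m0)
    (ε : ℤ → Ω → ℝ)
    (hεL2 : ∀ τ : ℤ, MemLp (ε τ) 2 μ)
    (hεmart : ∀ τ : ℤ, μ[ε τ | 𝓕 (τ - 1)] =ᵐ[μ] 0)
    (y : ℤ → Ω → ℝ)
    (hymeas : ∀ τ : ℤ, StronglyMeasurable[𝓕 τ] (y τ))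
    (hyint : ∀ τ : ℤ, Integrable (y τ) μ)
    (hy : ∀ τ : ℤ, y τ =ᵐ[μ] fun ω =>
      φ 0 τ + (∑ m ∈ Finset.Icc 1 p, φ m τ * y (τ - m) ω) + ε τ ω)
    (t : ℤ) (N : ℕ) (hN : 1 ≤ N) :
    (fun ω => y t ω - (μ[y t | 𝓕 (t - N)]) ω) =ᵐ[μ]
      fun ω => ∑ r ∈ Finset.range N, xi p φ t r * ε (t - r) ω := by
  have hε_int (τ : ℤ) : Integrable (ε τ) μ := (hεL2 τ).integrable one_le_two
  have hinnov : μ[∑ r ∈ range N, xi p φ t r • ε (t - r) | 𝓕 (t - N)] =ᵐ[μ] 0 :=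
    condExp_sum_smul_ae_eq_zero _ (fun _ _ => hε_int _) fun r hr =>
      condExp_ae_eq_zero_of_le (𝓕.mono (by simp at hr; omega)) (𝓕.le _) (hεmart _)
  refine (sub_condExp_ae_eq_of_ae_eq_add (𝓕.le _) (stronglyMeasurable_parPredictor hymeas t N)
    (integrable_parPredictor hyint t N) (integrable_finsetSum' _ fun _ _ => (hε_int _).smul _)
    hinnov (ae_eq_parPredictor_add_innovations hy t hN)).trans (EventuallyEq.of_eq ?_)
  ext ω
  simp [Finset.sum_apply]

/-- The forecast error of the `N`-step-ahead predictor of a PAR(`p`) process. -/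
theorem par_forecast_error
    (p : ℕ) (hp : 1 ≤ p) (φ : ℕ → ℤ → ℝ)
    {Ω : Type*} {m0 : MeasurableSpace Ω} {μ : Measure Ω} [IsProbabilityMeasure μ]
    (𝓕 : Filtration ℤ m0)
    (ε : ℤ → Ω → ℝ)
    (hεmeas : ∀ τ : ℤ, StronglyMeasurable[𝓕 τ] (ε τ))
    (hεL2 : ∀ τ : ℤ, MemLp (ε τ) 2 μ)
    (hεmart : ∀ τ : ℤ, μ[ε τ | 𝓕 (τ - 1)] =ᵐ[μ] 0)
    (y : ℤ → Ω → ℝ)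
    (hymeas : ∀ τ : ℤ, StronglyMeasurable[𝓕 τ] (y τ))
    (hyint : ∀ τ : ℤ, Integrable (y τ) μ)
    (hy : ∀ τ : ℤ, y τ =ᵐ[μ] fun ω =>
      φ 0 τ + (∑ m ∈ Finset.Icc 1 p, φ m τ * y (τ - m) ω) + ε τ ω)
    (t : ℤ) (N : ℕ) (hN : 1 ≤ N) :
    (fun ω => y t ω - (μ[y t | 𝓕 (t - N)]) ω) =ᵐ[μ]
      fun ω => ∑ r ∈ Finset.range N, xi p φ t r * ε (t - r) ω :=
  par_forecast_error_general p φ 𝓕 ε hεL2 hεmart y hymeas hyint hy t N hN
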